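/- (Countable additivity on S̃.) Let (S_i)_{i≥1} be a sequence of sets in S̃ that are pairwise almost disjoint, i.e., μ*(S_i ∩ S_j) = 0 for all i ≠ j. Then μ*(⋃_{i=1}^∞ S_i) = ∑_{i=1}^∞ μ*(S_i). -/

import Mathlib

open Filter Set Topology
open scoped symmDiff ENNReal

/-- `Ω` is an algebra of sets on `X`: it contains `∅` and is closed under
complements and finite unions. -/
def IsSetAlgebraOn {X : Type*} (Ω : Set (Set X)) : Prop :=
  ∅ ∈ Ω ∧ (∀ A ∈ Ω, Aᶜ ∈ Ω) ∧ (∀ A ∈ Ω, ∀ B ∈ Ω, A ∪ B ∈ Ω)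

/-- `μ` is a countably additive measure on the algebra `Ω`. -/
def IsCountablyAdditiveOn {X : Type*} (Ω : Set (Set X)) (μ : Set X → ℝ≥0∞) : Prop :=
  μ ∅ = 0 ∧ ∀ A : ℕ → Set X, (∀ i, A i ∈ Ω) → Pairwise (Function.onFun Disjoint A) →
    (⋃ i, A i) ∈ Ω → μ (⋃ i, A i) = ∑' i, μ (A i)

/-- The outer measure induced by `μ`:
`μ*(A) = inf { ∑ μ(Cᵢ) : A ⊆ ⋃ᵢ Cᵢ, Cᵢ ∈ Ω }`. -/
noncomputable def muStar {X : Type*} (Ω : Set (Set X)) (μ : Set X → ℝ≥0∞)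
    (A : Set X) : ℝ≥0∞ :=
  ⨅ (C : ℕ → Set X) (_ : ∀ i, C i ∈ Ω) (_ : A ⊆ ⋃ i, C i), ∑' i, μ (C i)

/-- A `μ`-Cauchy sequence in `Ω`: a sequence of members of `Ω` with
`μ(B n ∆ B m) → 0` as `n, m → ∞`. -/
def MuCauchy {X : Type*} (Ω : Set (Set X)) (μ : Set X → ℝ≥0∞) (B : ℕ → Set X) : Prop :=
  (∀ n, B n ∈ Ω) ∧ Tendsto (fun p : ℕ × ℕ => μ (B p.1 ∆ B p.2)) atTop (𝓝 0)

/-- `S̃`: the collection of subsets of `X` that are limits (in the pseudometric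
`d(A,B) = μ*(A ∆ B)`) of `μ`-Cauchy sequences from `Ω`. -/
def Stilde {X : Type*} (Ω : Set (Set X)) (μ : Set X → ℝ≥0∞) : Set (Set X) :=
  {S | ∃ B : ℕ → Set X, MuCauchy Ω μ B ∧
    Tendsto (fun n => muStar Ω μ (B n ∆ S)) atTop (𝓝 0)}

/-! `μ*` is `inducedOuterMeasure` of `μ` on `Ω`. The sets of `Ω` are
Carathéodory measurable for it (Carathéodory's extension theorem for the additive content `μ`),
and the Carathéodory measurable sets are closed in the pseudometric `μ*(A ∆ B)`, so every set of
`S̃` is Carathéodory measurable. On the Carathéodory σ-algebra `μ*` is a measure, and a measure is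
countably additive on almost disjoint measurable sets. -/

open MeasureTheory

section

variable {X : Type*} {Ω : Set (Set X)} {μ : Set X → ℝ≥0∞}

theorem IsSetAlgebraOn.isSetAlgebra (hΩ : IsSetAlgebraOn Ω) : IsSetAlgebra Ω where
  empty_mem := hΩ.1
  compl_mem := hΩ.2.1
  union_mem _ _ hs ht := hΩ.2.2 _ hs _ ht

theorem IsCountablyAdditiveOn.union_eq (hμ : IsCountablyAdditiveOn Ω μ) (hΩ : ∅ ∈ Ω)
    {A B : Set X} (hA : A ∈ Ω) (hB : B ∈ Ω) (hAB : A ∪ B ∈ Ω) (hd : Disjoint A B) :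
    μ (A ∪ B) = μ A + μ B := by
  let C : ℕ → Set X := fun n => Nat.casesOn n A fun k => Nat.casesOn k B fun _ => ∅
  have hC : ∀ n, C n ∈ Ω := by rintro (_ | _ | _) <;> assumption
  have hCd : Pairwise (Function.onFun Disjoint C) := by
    rintro (_ | _ | _) (_ | _ | _) hne <;> simp_all [C, Function.onFun, hd.symm]
  have hU : (⋃ n, C n) = A ∪ B := by
    simp [C, ← union_iUnion_nat_succ]
  have := hμ.2 C hC hCd (hU ▸ hAB)
  rw [hU, tsum_eq_zero_add' ENNReal.summable, tsum_eq_zero_add' ENNReal.summable] at this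
  simpa [C, hμ.1] using this

noncomputable def IsCountablyAdditiveOn.addContent (hΩ : IsSetAlgebraOn Ω)
    (hμ : IsCountablyAdditiveOn Ω μ) : AddContent ℝ≥0∞ Ω :=
  hΩ.isSetAlgebra.isSetRing.addContent_of_union μ hμ.1 fun hA hB =>
    hμ.union_eq hΩ.1 hA hB (hΩ.2.2 _ hA _ hB)

theorem muStar_eq_inducedOuterMeasure (hΩ : ∅ ∈ Ω) (hμ : μ ∅ = 0) :
    muStar Ω μ = inducedOuterMeasure (fun s (_ : s ∈ Ω) => μ s) hΩ hμ := by
  ext A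
  rw [inducedOuterMeasure, OuterMeasure.ofFunction_eq_iInf_mem (P := (· ∈ Ω)) _ _
    (fun _ => extend_eq_top _), muStar]
  refine iInf_congr fun C => iInf_congr fun hC => iInf_congr fun _ => tsum_congr fun i => ?_
  exact (extend_eq (fun s (_ : s ∈ Ω) => μ s) (hC i)).symm

theorem OuterMeasure.isCaratheodory_of_tendsto_symmDiff (m : OuterMeasure X) {B : ℕ → Set X}
    {T : Set X} (hB : ∀ n, m.IsCaratheodory (B n))
    (hT : Tendsto (fun n => m (B n ∆ T)) atTop (𝓝 0)) : m.IsCaratheodory T := by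
  refine (m.isCaratheodory_iff_le).2 fun E => ?_
  have hbound : ∀ n, m (E ∩ T) + m (E \ T) ≤ m E + (m (B n ∆ T) + m (B n ∆ T)) := by
    intro n
    have hinter : m (E ∩ T) ≤ m (E ∩ B n) + m (B n ∆ T) :=
      (measure_mono fun x (⟨hxE, hxT⟩ : x ∈ E ∩ T) => by
        by_cases hxB : x ∈ B n
        exacts [Or.inl ⟨hxE, hxB⟩, Or.inr (Or.inr ⟨hxT, hxB⟩)]).trans (measure_union_le _ _)
    have hdiff : m (E \ T) ≤ m (E \ B n) + m (B n ∆ T) :=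
      (measure_mono fun x (⟨hxE, hxT⟩ : x ∈ E \ T) => by
        by_cases hxB : x ∈ B n
        exacts [Or.inr (Or.inl ⟨hxB, hxT⟩), Or.inl ⟨hxE, hxB⟩]).trans (measure_union_le _ _)
    calc m (E ∩ T) + m (E \ T)
        ≤ (m (E ∩ B n) + m (B n ∆ T)) + (m (E \ B n) + m (B n ∆ T)) := add_le_add hinter hdiff
      _ = m E + (m (B n ∆ T) + m (B n ∆ T)) := by
          rw [add_add_add_comm, ← m.isCaratheodory_iff.1 (hB n) E]
  have hlim := tendsto_const_nhds (x := m E).add (hT.add hT)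
  rw [add_zero, add_zero] at hlim
  exact ge_of_tendsto' hlim hbound

theorem isCaratheodory_of_mem_Stilde (hΩ : IsSetAlgebraOn Ω) (hμ : IsCountablyAdditiveOn Ω μ)
    {T : Set X} (hT : T ∈ Stilde Ω μ) :
    (inducedOuterMeasure (fun s (_ : s ∈ Ω) => μ s) hΩ.1 hμ.1).IsCaratheodory T := by
  obtain ⟨B, ⟨hBΩ, -⟩, hBT⟩ := hT
  rw [muStar_eq_inducedOuterMeasure hΩ.1 hμ.1] at hBT
  exact OuterMeasure.isCaratheodory_of_tendsto_symmDiff _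
    (fun n => AddContent.isCaratheodory_inducedOuterMeasure_of_mem
      hΩ.isSetAlgebra.isSetRing.isSetSemiring (hμ.addContent hΩ) (hBΩ n)) hBT

theorem OuterMeasure.iUnion_eq_tsum_of_isCaratheodory {ι : Type*} [Countable ι]
    (m : OuterMeasure X) {S : ι → Set X} (hS : ∀ i, m.IsCaratheodory (S i))
    (hdisj : Pairwise fun i j => m (S i ∩ S j) = 0) : m (⋃ i, S i) = ∑' i, m (S i) := by
  let _ : MeasurableSpace X := m.caratheodory
  have hSm : ∀ i, MeasurableSet (S i) := hS
  have htoMeasure (s : Set X) (hs : MeasurableSet s) : m.toMeasure le_rfl s = m s :=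
    toMeasure_apply m le_rfl hs
  rw [← htoMeasure _ (.iUnion hSm), measure_iUnion₀ _ fun i => (hSm i).nullMeasurableSet]
  · exact tsum_congr fun i => htoMeasure _ (hSm i)
  · intro i j hij
    exact (htoMeasure _ ((hSm i).inter (hSm j))).trans (hdisj hij)

end

theorem stmt15_general {X : Type*} (Ω : Set (Set X)) (μ : Set X → ℝ≥0∞)
    (hΩ : IsSetAlgebraOn Ω) (hμ : IsCountablyAdditiveOn Ω μ)
    (S : ℕ → Set X) (hS : ∀ i, S i ∈ Stilde Ω μ)
    (hdisj : ∀ i j, i ≠ j → muStar Ω μ (S i ∩ S j) = 0) :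
    muStar Ω μ (⋃ i, S i) = ∑' i, muStar Ω μ (S i) := by
  rw [muStar_eq_inducedOuterMeasure hΩ.1 hμ.1] at hdisj ⊢
  exact OuterMeasure.iUnion_eq_tsum_of_isCaratheodory _
    (fun i => isCaratheodory_of_mem_Stilde hΩ hμ (hS i)) fun i j => hdisj i j

/-- countable additivity on S̃. -/
theorem stmt15 {X : Type*} (Ω : Set (Set X)) (μ : Set X → ℝ≥0∞)
    (hΩ : IsSetAlgebraOn Ω) (hμ : IsCountablyAdditiveOn Ω μ) (hfin : μ Set.univ ≠ ⊤)
    (S : ℕ → Set X) (hS : ∀ i, S i ∈ Stilde Ω μ)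
    (hdisj : ∀ i j, i ≠ j → muStar Ω μ (S i ∩ S j) = 0) :
    muStar Ω μ (⋃ i, S i) = ∑' i, muStar Ω μ (S i) :=
  stmt15_general Ω μ hΩ hμ S hS hdisj
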